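/- arXiv:2002.07567 — 2 statements merged into one kernel-verified Lean document; each statement's English description precedes it below -/
import Mathlib

section
/- Fix a₀ > 0 and λ ≥ 0, and let σ ∈ ℂ with Re(σ) = a ≥ a₀. Define θ = (e^σ + e^{-σ})/(e^σ − e^{-σ}) and ρ₀ = e^{-2a₀}. Then (1−ρ₀)/(1+ρ₀) ≤ |θ| ≤ (1+ρ₀)/(1−ρ₀) and |θ + 1| ≥ 2/(1 + ρ₀). -/
open Complex

/-! With `w = e^{-2σ}` one has `θ = (1 + w)/(1 - w)` and `|w| ≤ ρ₀ < 1`, so all three bounds follow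
from the triangle inequalities `1 - ρ₀ ≤ |1 ± w| ≤ 1 + ρ₀` and from `θ + 1 = 2/(1 - w)`. -/

section CayleyBounds

variable {𝕜 : Type*} [NormedDivisionRing 𝕜] {w : 𝕜} {r : ℝ}

lemma one_sub_le_norm_one_add (hw : ‖w‖ ≤ r) : 1 - r ≤ ‖1 + w‖ := by
  have := norm_sub_norm_le (1 : 𝕜) (-w)
  rw [norm_one, norm_neg, sub_neg_eq_add] at this
  linarith

lemma one_sub_le_norm_one_sub (hw : ‖w‖ ≤ r) : 1 - r ≤ ‖1 - w‖ := by
  have := norm_sub_norm_le (1 : 𝕜) w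
  rw [norm_one] at this
  linarith

lemma norm_one_add_le (hw : ‖w‖ ≤ r) : ‖1 + w‖ ≤ 1 + r := by
  have := norm_add_le (1 : 𝕜) w
  rw [norm_one] at this
  linarith

lemma norm_one_sub_le (hw : ‖w‖ ≤ r) : ‖1 - w‖ ≤ 1 + r := by
  have := norm_sub_le (1 : 𝕜) w
  rw [norm_one] at this
  linarith

lemma one_sub_div_one_add_le_norm_cayley (hw : ‖w‖ ≤ r) (hr : r < 1) :
    (1 - r) / (1 + r) ≤ ‖(1 + w) / (1 - w)‖ := by
  rw [norm_div]
  exact div_le_div₀ (norm_nonneg _) (one_sub_le_norm_one_add hw)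
    (by linarith [one_sub_le_norm_one_sub hw]) (norm_one_sub_le hw)

lemma norm_cayley_le (hw : ‖w‖ ≤ r) (hr : r < 1) :
    ‖(1 + w) / (1 - w)‖ ≤ (1 + r) / (1 - r) := by
  rw [norm_div]
  exact div_le_div₀ (by linarith [(norm_nonneg w).trans hw]) (norm_one_add_le hw)
    (by linarith) (one_sub_le_norm_one_sub hw)

end CayleyBounds

lemma two_div_one_add_le_norm_cayley_add_one {𝕜 : Type*} [RCLike 𝕜] {w : 𝕜} {r : ℝ}
    (hw : ‖w‖ ≤ r) (hr : r < 1) : 2 / (1 + r) ≤ ‖(1 + w) / (1 - w) + 1‖ := by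
  have hw1 : 1 - w ≠ 0 := by
    rintro h
    rw [← sub_eq_zero.mp h, norm_one] at hw
    linarith
  have hsum : (1 + w) / (1 - w) + 1 = 2 / (1 - w) := by
    field_simp
    ring
  rw [hsum, norm_div, RCLike.norm_ofNat]
  exact div_le_div₀ zero_le_two le_rfl (norm_pos_iff.mpr hw1) (norm_one_sub_le hw)

lemma exp_add_exp_neg_div_exp_sub_exp_neg (σ : ℂ) :
    (exp σ + exp (-σ)) / (exp σ - exp (-σ)) = (1 + exp (-2 * σ)) / (1 - exp (-2 * σ)) := by
  have hfac : exp (-σ) = exp σ * exp (-2 * σ) := by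
    rw [← exp_add]
    ring_nf
  rw [hfac, ← mul_one_add, ← mul_one_sub, mul_div_mul_left _ _ (exp_ne_zero σ)]

lemma norm_exp_neg_two_mul_le {a₀ : ℝ} {σ : ℂ} (hσ : a₀ ≤ σ.re) :
    ‖exp (-2 * σ)‖ ≤ Real.exp (-2 * a₀) := by
  rw [norm_exp, Real.exp_le_exp]
  simp only [mul_re, neg_re, re_ofNat, neg_im, im_ofNat]
  linarith

/-- For `σ` with `Re σ ≥ a₀ > 0`, with `θ = (e^σ + e^{-σ})/(e^σ − e^{-σ})` and
`ρ₀ = e^{-2a₀}`, one has `(1−ρ₀)/(1+ρ₀) ≤ |θ| ≤ (1+ρ₀)/(1−ρ₀)` and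
`|θ + 1| ≥ 2/(1 + ρ₀)`. -/
theorem theta_bounds (a₀ : ℝ) (ha₀ : 0 < a₀) (σ : ℂ) (hσ : a₀ ≤ σ.re) :
    let θ : ℂ := (Complex.exp σ + Complex.exp (-σ)) / (Complex.exp σ - Complex.exp (-σ))
    let ρ₀ : ℝ := Real.exp (-2 * a₀)
    (1 - ρ₀) / (1 + ρ₀) ≤ ‖θ‖ ∧
    ‖θ‖ ≤ (1 + ρ₀) / (1 - ρ₀) ∧
    2 / (1 + ρ₀) ≤ ‖θ + 1‖ := by
  intro θ ρ₀
  have hw : ‖exp (-2 * σ)‖ ≤ ρ₀ := norm_exp_neg_two_mul_le hσ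
  have hρ₀ : ρ₀ < 1 := Real.exp_lt_one_iff.mpr (by linarith)
  have hθ : θ = (1 + exp (-2 * σ)) / (1 - exp (-2 * σ)) := exp_add_exp_neg_div_exp_sub_exp_neg σ
  rw [hθ]
  exact ⟨one_sub_div_one_add_le_norm_cayley hw hρ₀, norm_cayley_le hw hρ₀,
    two_div_one_add_le_norm_cayley_add_one hw hρ₀⟩
end

section
/- Let G₁(s) = 1/d(s) with d(s) = (s+2λ+αs²−qs)·sinh(σ)/σ + (αs−q+1)·cosh(σ), σ² = s²+2λs. If 2λ = q−1 and α ≠ (q−1) + (1/3)(q−1)², then lim_{s→0} s·G₁(s) = 1/(α − (q−1) − (1/3)(q−1)²), i.e. G₁ has a simple pole at the origin with that residue. -/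
open Complex Filter

noncomputable def sinhcSq (z : ℂ) : ℂ := ∑' n : ℕ, z ^ n / ((2 * n + 1).factorial : ℂ)

noncomputable def coshSq (z : ℂ) : ℂ := ∑' n : ℕ, z ^ n / ((2 * n).factorial : ℂ)

/-- The denominator `d(s)` of the transfer function, with `σ² = s² + 2λs`. -/
noncomputable def dfun (q α lam : ℝ) (s : ℂ) : ℂ :=
  (s + 2 * lam + α * s ^ 2 - q * s) * sinhcSq (s ^ 2 + 2 * lam * s) +
    (α * s - q + 1) * coshSq (s ^ 2 + 2 * lam * s)

/-!
The denominator vanishes at the origin: `d(0) = 2λ + 1 - q = 0`. Both series are entire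
functions of `σ²`, with value `1` and derivative `1/3!`, resp. `1/2!`, at `σ² = 0`, and
`σ² = s² + 2λs` has derivative `2λ` at `s = 0`; the product rule gives
`d'(0) = α + 1 - q + 2λ²/3 + (1 - q)λ`, which is `α - (q-1) - (q-1)²/3` when `2λ = q - 1`.
Since this is nonzero, `s / d(s) = ((d(s) - d(0)) / s)⁻¹ → d'(0)⁻¹`.
-/

open Nat FormalMultilinearSeries Topology

lemma succ_mul_factorial_le_factorial_of_strictMono {a : ℕ → ℕ} (ha : StrictMono a) (n : ℕ) :
    (n + 1) * (a n)! ≤ (a (n + 1))! :=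
  calc (n + 1) * (a n)! ≤ (a n + 1) * (a n)! := Nat.mul_le_mul_right _ (succ_le_succ (ha.id_le n))
    _ = (a n + 1)! := (factorial_succ _).symm
    _ ≤ (a (n + 1))! := factorial_le (ha (lt_add_one n))

lemma radius_ofScalars_inv_factorial_eq_top {𝕜 : Type*} [RCLike 𝕜] {a : ℕ → ℕ}
    (ha : StrictMono a) : (ofScalars 𝕜 fun n => ((a n)! : 𝕜)⁻¹).radius = ⊤ := by
  refine ofScalars_radius_eq_top_of_tendsto 𝕜 _
    (.of_forall fun n => inv_ne_zero (cast_ne_zero.mpr (factorial_ne_zero _))) ?_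
  refine squeeze_zero (fun n => by positivity) (fun n => ?_)
    tendsto_one_div_add_atTop_nhds_zero_nat
  have key : ((n + 1) * (a n)! : ℝ) ≤ (a (n + 1))! := by
    exact_mod_cast succ_mul_factorial_le_factorial_of_strictMono ha n
  simp only [norm_inv, RCLike.norm_natCast, inv_div_inv]
  rw [div_le_div_iff₀ (by positivity) (by positivity)]
  linarith

lemma hasDerivAt_tsum_pow_div_factorial_zero {𝕜 : Type*} [RCLike 𝕜] {a : ℕ → ℕ}
    (ha : StrictMono a) :
    HasDerivAt (fun z : 𝕜 => ∑' n, z ^ n / ((a n)! : 𝕜)) ((a 1)! : 𝕜)⁻¹ 0 := by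
  set p := ofScalars 𝕜 fun n => ((a n)! : 𝕜)⁻¹
  have hp : HasFPowerSeriesAt p.sum p 0 := by
    refine (p.hasFPowerSeriesOnBall ?_).hasFPowerSeriesAt
    simp [p, radius_ofScalars_inv_factorial_eq_top ha]
  have hsum : p.sum = fun z : 𝕜 => ∑' n, z ^ n / ((a n)! : 𝕜) := by
    funext z
    rw [show p.sum z = ofScalarsSum _ z from rfl, ofScalars_sum_eq]
    simp only [smul_eq_mul, div_eq_inv_mul]
  simpa [hsum, p, ofScalars_apply_eq] using hp.hasDerivAt

lemma sinhcSq_zero : sinhcSq 0 = 1 := by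
  rw [sinhcSq, tsum_eq_single 0 fun n hn => by simp [zero_pow hn]]
  simp

lemma coshSq_zero : coshSq 0 = 1 := by
  rw [coshSq, tsum_eq_single 0 fun n hn => by simp [zero_pow hn]]
  simp

lemma hasDerivAt_sinhcSq_zero : HasDerivAt sinhcSq 6⁻¹ 0 := by
  have h := hasDerivAt_tsum_pow_div_factorial_zero (𝕜 := ℂ) (a := fun n => 2 * n + 1)
    (strictMono_nat_of_lt_succ fun n => by omega)
  rwa [show ((2 * 1 + 1)! : ℂ) = 6 by norm_num [factorial]] at h

lemma hasDerivAt_coshSq_zero : HasDerivAt coshSq 2⁻¹ 0 := by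
  have h := hasDerivAt_tsum_pow_div_factorial_zero (𝕜 := ℂ) (a := fun n => 2 * n)
    (strictMono_nat_of_lt_succ fun n => by omega)
  rwa [show ((2 * 1)! : ℂ) = 2 by norm_num [factorial]] at h

lemma dfun_zero {q α lam : ℝ} (hlam : 2 * lam = q - 1) : dfun q α lam 0 = 0 := by
  simp only [dfun, zero_pow two_ne_zero, mul_zero, add_zero, sinhcSq_zero, coshSq_zero]
  linear_combination (by exact_mod_cast hlam : (2 * lam : ℂ) = q - 1)

lemma hasDerivAt_dfun_zero (q α lam : ℝ) :
    HasDerivAt (dfun q α lam) (α + 1 - q + 2 * lam ^ 2 / 3 + (1 - q) * lam : ℝ) 0 := by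
  have hσ : HasDerivAt (fun s : ℂ => s ^ 2 + 2 * lam * s) (2 * (lam : ℂ)) 0 := by
    simpa using (hasDerivAt_pow 2 (0 : ℂ)).fun_add
      ((hasDerivAt_id' (0 : ℂ)).const_mul (2 * (lam : ℂ)))
  have hσ0 : (0 : ℂ) = 0 ^ 2 + 2 * lam * 0 := by ring
  have hS := hasDerivAt_sinhcSq_zero.comp_of_eq 0 hσ hσ0
  have hC := hasDerivAt_coshSq_zero.comp_of_eq 0 hσ hσ0
  have hA : HasDerivAt (fun s : ℂ => s + 2 * lam + α * s ^ 2 - q * s) (1 - (q : ℂ)) 0 := by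
    simpa using (((hasDerivAt_id' (0 : ℂ)).add_const (2 * (lam : ℂ))).fun_add
      ((hasDerivAt_pow 2 (0 : ℂ)).const_mul (α : ℂ))).fun_sub
      ((hasDerivAt_id' (0 : ℂ)).const_mul (q : ℂ))
  have hB : HasDerivAt (fun s : ℂ => α * s - q + 1) (α : ℂ) 0 := by
    simpa using (((hasDerivAt_id' (0 : ℂ)).const_mul (α : ℂ)).sub_const (q : ℂ)).add_const 1
  refine ((hA.fun_mul hS).fun_add (hB.fun_mul hC)).congr_deriv ?_
  simp only [Function.comp_apply, ← hσ0, sinhcSq_zero, coshSq_zero]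
  push_cast
  ring

lemma tendsto_mul_one_div_of_hasDerivAt_zero {𝕜 : Type*} [NontriviallyNormedField 𝕜]
    {f : 𝕜 → 𝕜} {c : 𝕜} (hf : HasDerivAt f c 0) (hf0 : f 0 = 0) (hc : c ≠ 0) :
    Tendsto (fun s => s * (1 / f s)) (𝓝[≠] 0) (𝓝 c⁻¹) := by
  refine ((hasDerivAt_iff_tendsto_slope.mp hf).inv₀ hc).congr fun s => ?_
  rw [slope_def_field, hf0, sub_zero, sub_zero, inv_div, mul_one_div]

theorem simple_pole_at_origin_general (q α lam : ℝ)
    (hlam : 2 * lam = q - 1) (hexc : α ≠ (q - 1) + 1 / 3 * (q - 1) ^ 2) :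
    Tendsto (fun s : ℂ => s * (1 / dfun q α lam s)) (nhdsWithin 0 {0}ᶜ)
      (nhds (((α - (q - 1) - 1 / 3 * (q - 1) ^ 2 : ℝ) : ℂ)⁻¹)) := by
  have hres : α + 1 - q + 2 * lam ^ 2 / 3 + (1 - q) * lam =
      α - (q - 1) - 1 / 3 * (q - 1) ^ 2 := by
    obtain rfl : lam = (q - 1) / 2 := by linarith
    ring
  refine tendsto_mul_one_div_of_hasDerivAt_zero (hres ▸ hasDerivAt_dfun_zero q α lam)
    (dfun_zero hlam) ?_
  exact ofReal_ne_zero.mpr fun h => hexc (by linarith)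

/-- If `2λ = q − 1` and `α ≠ (q−1) + (1/3)(q−1)²`, then
`s·G₁(s) = s/d(s) → 1/(α − (q−1) − (1/3)(q−1)²)` as `s → 0`:
`G₁` has a simple pole at the origin with the stated residue. -/
theorem simple_pole_at_origin (q α lam : ℝ) (hq : 1 < q) (hα : 0 ≤ α)
    (hlam : 2 * lam = q - 1) (hexc : α ≠ (q - 1) + 1 / 3 * (q - 1) ^ 2) :
    Tendsto (fun s : ℂ => s * (1 / dfun q α lam s)) (nhdsWithin 0 {0}ᶜ)
      (nhds (((α - (q - 1) - 1 / 3 * (q - 1) ^ 2 : ℝ) : ℂ)⁻¹)) :=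
  simple_pole_at_origin_general q α lam hlam hexc
end
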